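/- arXiv:2006.12938 — 2 statements merged into one kernel-verified Lean document; each statement's English description precedes it below -/
import Mathlib

section
/- Let Z be a measurable space and let L : ℝ × ℝ → [0,∞) be measurable, symmetric (L(a,b) = L(b,a)) and satisfy the triangle inequality (L(a,c) ≤ L(a,b) + L(b,c) for all a, b, c). Let p_T be a probability measure on Z × ℝ, let f, f* : Z → ℝ be measurable, and let p_T^f be the self-labelled distribution associated with f. Then ε_{p_T}(f) ≤ ε_{p_T}(f*) + ε_{p_T^f}(f*), with all expected losses taken as integrals in [0,∞]. -/
/-!
Pointwise, the triangle inequality through `f* x` and symmetry give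
`L(y, f x) ≤ L(y, f* x) + L(f x, f* x)`. Integrating against `p_T`, the second term becomes
`ε_{p_T^f}(f*)`, because `p_T^f` is the image of `p_T` under `(x, y) ↦ (x, f x)`.
-/

open MeasureTheory ENNReal

/-- Expected loss of a predictor `h` with respect to a loss `L` and a joint
distribution `p` on `Z × ℝ` (taken in `[0,∞]`). -/
noncomputable def expLoss {Z : Type*} [MeasurableSpace Z]
    (L : ℝ → ℝ → ℝ) (p : Measure (Z × ℝ)) (h : Z → ℝ) : ℝ≥0∞ :=
  ∫⁻ z, ENNReal.ofReal (L z.2 (h z.1)) ∂p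

/-- Self-labelled distribution: the pushforward of the first marginal of `p`
under `x ↦ (x, f x)`. -/
noncomputable def selfLabel {Z : Type*} [MeasurableSpace Z]
    (p : Measure (Z × ℝ)) (f : Z → ℝ) : Measure (Z × ℝ) :=
  (p.map Prod.fst).map fun x => (x, f x)

section

variable {Z : Type*} [MeasurableSpace Z] {L : ℝ → ℝ → ℝ}

theorem selfLabel_eq_map (p : Measure (Z × ℝ)) {f : Z → ℝ} (hf : Measurable f) :
    selfLabel p f = p.map fun z => (z.1, f z.1) :=
  Measure.map_map (measurable_id.prodMk hf) measurable_fst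

theorem measurable_ofReal_loss (hL : Measurable fun yy : ℝ × ℝ => L yy.1 yy.2)
    {h : Z → ℝ} (hh : Measurable h) :
    Measurable fun z : Z × ℝ => ENNReal.ofReal (L z.2 (h z.1)) :=
  measurable_ofReal.comp (hL.comp (measurable_snd.prodMk (hh.comp measurable_fst)))

theorem expLoss_selfLabel (hL : Measurable fun yy : ℝ × ℝ => L yy.1 yy.2)
    (p : Measure (Z × ℝ)) {f h : Z → ℝ} (hf : Measurable f) (hh : Measurable h) :
    expLoss L (selfLabel p f) h = ∫⁻ z, ENNReal.ofReal (L (f z.1) (h z.1)) ∂p := by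
  rw [expLoss, selfLabel_eq_map p hf]
  exact lintegral_map (measurable_ofReal_loss hL hh) (measurable_fst.prodMk (hf.comp measurable_fst))

theorem ofReal_loss_le (hLsymm : ∀ a b, L a b = L b a)
    (hLtri : ∀ a b c, L a c ≤ L a b + L b c) (y a b : ℝ) :
    ENNReal.ofReal (L y a) ≤ ENNReal.ofReal (L y b) + ENNReal.ofReal (L a b) :=
  (ofReal_le_ofReal (hLsymm a b ▸ hLtri y b a)).trans ofReal_add_le

end

theorem stmt6_general {Z : Type*} [MeasurableSpace Z]
    (L : ℝ → ℝ → ℝ) (hLmeas : Measurable fun yy : ℝ × ℝ => L yy.1 yy.2)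
    (hLsymm : ∀ a b, L a b = L b a)
    (hLtri : ∀ a b c, L a c ≤ L a b + L b c)
    (pT : Measure (Z × ℝ))
    (f fstar : Z → ℝ) (hf : Measurable f) (hfstar : Measurable fstar) :
    expLoss L pT f ≤ expLoss L pT fstar + expLoss L (selfLabel pT f) fstar := by
  calc expLoss L pT f
      ≤ ∫⁻ z, ENNReal.ofReal (L z.2 (fstar z.1)) + ENNReal.ofReal (L (f z.1) (fstar z.1)) ∂pT :=
        lintegral_mono fun z => ofReal_loss_le hLsymm hLtri z.2 (f z.1) (fstar z.1)
    _ = expLoss L pT fstar + expLoss L (selfLabel pT f) fstar := by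
        rw [lintegral_add_left (measurable_ofReal_loss hLmeas hfstar),
          expLoss_selfLabel hLmeas pT hf hfstar, expLoss]

/-- For a symmetric loss satisfying the triangle inequality,
`ε_{p_T}(f) ≤ ε_{p_T}(f*) + ε_{p_T^f}(f*)`. -/
theorem stmt6 {Z : Type*} [MeasurableSpace Z]
    (L : ℝ → ℝ → ℝ) (hLmeas : Measurable fun yy : ℝ × ℝ => L yy.1 yy.2)
    (hL0 : ∀ a b, 0 ≤ L a b)
    (hLsymm : ∀ a b, L a b = L b a)
    (hLtri : ∀ a b c, L a c ≤ L a b + L b c)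
    (pT : Measure (Z × ℝ)) [IsProbabilityMeasure pT]
    (f fstar : Z → ℝ) (hf : Measurable f) (hfstar : Measurable fstar) :
    expLoss L pT f ≤ expLoss L pT fstar + expLoss L (selfLabel pT f) fstar :=
  stmt6_general L hLmeas hLsymm hLtri pT f fstar hf hfstar
end

section
/- Let (Z, d) be a measurable space equipped with a measurable pseudometric d, let k > 0, λ > 0, M ≥ 0, φ ∈ [0,1], and let L : ℝ × ℝ → [0,∞) be measurable, symmetric, k-Lipschitz in each argument (|L(y,a) − L(y,b)| ≤ k|a − b|), and satisfying the triangle inequality. Let p_S^α and p_T^f be probability measures on Z × ℝ (p_T^f the self-labelled distribution of a measurable f with respect to a target measure p_T on Z × ℝ), and let f* : Z → ℝ be measurable with |f*(x) − f*(x')| ≤ M for all x, x'. Let D be the ground cost D((x,y),(x',y')) = kλ·d(x,x') + L(y,y') on Z × ℝ, and suppose there exists a coupling π* of p_S^α and p_T^f attaining W_D(p_S^α, p_T^f) and such that π*{((x_α, y_α), (x_T, y_T)) : |f*(x_α) − f*(x_T)| > λ·d(x_α, x_T)} ≤ φ. Then |ε_{p_T^f}(f*) − ε_{p_S^α}(f*)|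 ≤ k·M·φ + W_D(p_S^α, p_T^f), provided the expected losses ε_{p_T^f}(f*) and ε_{p_S^α}(f*) are finite. -/
/-! For every pair `((x, y), (x', y'))`, symmetry and the triangle inequality of `L` move the
label from `y'` to `y` at cost `L(y, y')`, and Lipschitzness of `L` moves the prediction from
`f* x'` to `f* x` at cost `k |f* x - f* x'|`. The latter is at most `kλ d(x, x')` off the set
where `f*` fails to be `λ`-Lipschitz and at most `k M` on it. Integrating against the optimal
coupling `π*` bounds each error by the other plus `W_D` plus `k M π*(that set) ≤ k M φ`. -/

open MeasureTheory ENNReal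

/-- `π` is a coupling of `p` and `q`: a probability measure on the product
whose first marginal is `p` and whose second marginal is `q`. -/
def IsCoupling {V : Type*} [MeasurableSpace V]
    (π : Measure (V × V)) (p q : Measure V) : Prop :=
  IsProbabilityMeasure π ∧ π.map Prod.fst = p ∧ π.map Prod.snd = q

/-- Optimal transport cost for a nonnegative cost `c`: infimum over all
couplings of the integral of the cost (taken in `[0,∞]`). -/
noncomputable def otCost {V : Type*} [MeasurableSpace V]
    (c : V → V → ℝ) (p q : Measure V) : ℝ≥0∞ :=
  ⨅ (π : Measure (V × V)) (_ : IsCoupling π p q),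
    ∫⁻ w, ENNReal.ofReal (c w.1 w.2) ∂π

theorem nonneg_of_refl_of_symm_of_triangle {Z : Type*} {d : Z → Z → ℝ}
    (hrefl : ∀ x, d x x = 0) (hsymm : ∀ x x', d x x' = d x' x)
    (htri : ∀ x y z, d x z ≤ d x y + d y z) (x x' : Z) :
    0 ≤ d x x' := by
  linarith [htri x x' x, hrefl x, hsymm x' x]

theorem ofReal_le_add_add_indicator {β : Type*} {A B C m : ℝ} {S : Set β} {x : β}
    (h : A ≤ B + (C + S.indicator (fun _ => m) x)) :
    ENNReal.ofReal A
      ≤ ENNReal.ofReal B + (ENNReal.ofReal C + S.indicator (fun _ => ENNReal.ofReal m) x) := by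
  have hind : ENNReal.ofReal (S.indicator (fun _ => m) x)
      = S.indicator (fun _ => ENNReal.ofReal m) x := by
    by_cases hx : x ∈ S <;> simp [hx]
  exact (ofReal_le_ofReal h).trans <| ofReal_add_le.trans <|
    add_le_add_right (ofReal_add_le.trans_eq (by rw [hind])) _

theorem lintegral_le_lintegral_add_of_le_add_indicator {α : Type*} [MeasurableSpace α]
    {μ : Measure α} {f g c : α → ℝ≥0∞} {S : Set α} {a : ℝ≥0∞} (hg : Measurable g)
    (hc : Measurable c) (h : ∀ x, f x ≤ g x + (c x + S.indicator (fun _ => a) x)) :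
    ∫⁻ x, f x ∂μ ≤ ∫⁻ x, g x ∂μ + (a * μ S + ∫⁻ x, c x ∂μ) :=
  (lintegral_mono h).trans <| by
    rw [lintegral_add_left hg, lintegral_add_left hc, add_comm (∫⁻ x, c x ∂μ)]
    gcongr
    exact lintegral_indicator_const_le S a

theorem loss_le_loss_add_loss_add_mul_abs_sub {L : ℝ → ℝ → ℝ} {k : ℝ}
    (hsymm : ∀ a b, L a b = L b a) (htri : ∀ a b c, L a c ≤ L a b + L b c)
    (hlip : ∀ y a b, |L y a - L y b| ≤ k * |a - b|) (y y' a a' : ℝ) :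
    L y' a' ≤ L y a + (L y y' + k * |a - a'|) := by
  have hmove := (abs_le.1 (hlip y a' a)).2
  rw [abs_sub_comm] at hmove
  linarith [htri y' y a', hsymm y' y]

-- The probabilistic transfer Lipschitzness of the paper bounds the mass of this set.
def ptlViolation {Z : Type*} (lam : ℝ) (d : Z → Z → ℝ) (h : Z → ℝ) :
    Set ((Z × ℝ) × (Z × ℝ)) :=
  {w | lam * d w.1.1 w.2.1 < |h w.1.1 - h w.2.1|}

theorem mul_abs_sub_le_add_indicator_ptlViolation {Z : Type*} {d : Z → Z → ℝ} {h : Z → ℝ}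
    {k lam M : ℝ} (hk : 0 ≤ k) (hlam : 0 ≤ lam) (w : (Z × ℝ) × (Z × ℝ))
    (hd : 0 ≤ d w.1.1 w.2.1) (hM : |h w.1.1 - h w.2.1| ≤ M) :
    k * |h w.1.1 - h w.2.1|
      ≤ k * lam * d w.1.1 w.2.1 + (ptlViolation lam d h).indicator (fun _ => k * M) w := by
  by_cases hw : w ∈ ptlViolation lam d h
  · rw [Set.indicator_of_mem hw]
    have : 0 ≤ k * lam * d w.1.1 w.2.1 := by positivity
    linarith [mul_le_mul_of_nonneg_left hM hk]
  · rw [Set.indicator_of_notMem hw, add_zero, mul_assoc]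
    exact mul_le_mul_of_nonneg_left (not_lt.1 hw) hk

theorem loss_le_loss_add_cost_add_indicator {Z : Type*} {d : Z → Z → ℝ}
    {L : ℝ → ℝ → ℝ} {h : Z → ℝ} {k lam M : ℝ} (hk : 0 ≤ k) (hlam : 0 ≤ lam)
    (hd : ∀ x x', 0 ≤ d x x')
    (hLsymm : ∀ a b, L a b = L b a) (hLtri : ∀ a b c, L a c ≤ L a b + L b c)
    (hLlip : ∀ y a b, |L y a - L y b| ≤ k * |a - b|)
    (hM : ∀ x x', |h x - h x'| ≤ M) (w : (Z × ℝ) × (Z × ℝ)) :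
    L w.2.2 (h w.2.1) ≤ L w.1.2 (h w.1.1) + (k * lam * d w.1.1 w.2.1 + L w.1.2 w.2.2
        + (ptlViolation lam d h).indicator (fun _ => k * M) w) ∧
      L w.1.2 (h w.1.1) ≤ L w.2.2 (h w.2.1) + (k * lam * d w.1.1 w.2.1 + L w.1.2 w.2.2
        + (ptlViolation lam d h).indicator (fun _ => k * M) w) := by
  have hpred := mul_abs_sub_le_add_indicator_ptlViolation hk hlam w (hd _ _) (hM _ _)
  have hfwd := loss_le_loss_add_loss_add_mul_abs_sub hLsymm hLtri hLlip
    w.1.2 w.2.2 (h w.1.1) (h w.2.1)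
  have hbwd := loss_le_loss_add_loss_add_mul_abs_sub hLsymm hLtri hLlip
    w.2.2 w.1.2 (h w.2.1) (h w.1.1)
  rw [hLsymm w.2.2 w.1.2, abs_sub_comm] at hbwd
  constructor <;> linarith

theorem stmt7_general {Z : Type*} [MeasurableSpace Z]
    (d : Z → Z → ℝ) (hdmeas : Measurable fun w : Z × Z => d w.1 w.2)
    (hdrefl : ∀ x, d x x = 0) (hdsymm : ∀ x x', d x x' = d x' x)
    (hdtri : ∀ x y z, d x z ≤ d x y + d y z)
    (k lam M φ : ℝ) (hk : 0 < k) (hlam : 0 < lam)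
    (hφ0 : 0 ≤ φ)
    (L : ℝ → ℝ → ℝ) (hLmeas : Measurable fun yy : ℝ × ℝ => L yy.1 yy.2)
    (hLsymm : ∀ a b, L a b = L b a)
    (hLtri : ∀ a b c, L a c ≤ L a b + L b c)
    (hLlip : ∀ y a b, |L y a - L y b| ≤ k * |a - b|)
    (pSα pT : Measure (Z × ℝ))
    (f : Z → ℝ)
    (fstar : Z → ℝ) (hfstar : Measurable fstar)
    (hfstarM : ∀ x x', |fstar x - fstar x'| ≤ M)
    (πstar : Measure ((Z × ℝ) × (Z × ℝ)))
    (hπstar : IsCoupling πstar pSα (selfLabel pT f))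
    (hopt : ∫⁻ w, ENNReal.ofReal (k * lam * d w.1.1 w.2.1 + L w.1.2 w.2.2) ∂πstar
      = otCost (fun w w' : Z × ℝ => k * lam * d w.1 w'.1 + L w.2 w'.2) pSα (selfLabel pT f))
    (hptl : πstar {w : (Z × ℝ) × (Z × ℝ) |
        lam * d w.1.1 w.2.1 < |fstar w.1.1 - fstar w.2.1|} ≤ ENNReal.ofReal φ) :
    max (expLoss L (selfLabel pT f) fstar - expLoss L pSα fstar)
        (expLoss L pSα fstar - expLoss L (selfLabel pT f) fstar)
      ≤ ENNReal.ofReal (k * M * φ)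
        + otCost (fun w w' : Z × ℝ => k * lam * d w.1 w'.1 + L w.2 w'.2)
            pSα (selfLabel pT f) := by
  obtain ⟨-, hfst, hsnd⟩ := hπstar
  have hloss : Measurable fun z : Z × ℝ => ENNReal.ofReal (L z.2 (fstar z.1)) :=
    (hLmeas.comp (measurable_snd.prodMk (hfstar.comp measurable_fst))).ennreal_ofReal
  have hcost : Measurable fun w : (Z × ℝ) × (Z × ℝ) =>
      ENNReal.ofReal (k * lam * d w.1.1 w.2.1 + L w.1.2 w.2.2) :=
    (((hdmeas.comp (measurable_fst.fst.prodMk measurable_snd.fst)).const_mul _).add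
      (hLmeas.comp (measurable_fst.snd.prodMk measurable_snd.snd))).ennreal_ofReal
  have hexcess : ENNReal.ofReal (k * M) * πstar (ptlViolation lam d fstar)
      ≤ ENNReal.ofReal (k * M * φ) := by
    rw [ofReal_mul' hφ0]
    exact mul_le_mul_right hptl _
  have hpt := loss_le_loss_add_cost_add_indicator hk.le hlam.le
    (nonneg_of_refl_of_symm_of_triangle hdrefl hdsymm hdtri) hLsymm hLtri hLlip hfstarM
  rw [← hopt, expLoss, expLoss, ← hfst, ← hsnd, lintegral_map hloss measurable_fst,
    lintegral_map hloss measurable_snd]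
  refine max_le (tsub_le_iff_left.2 ?_) (tsub_le_iff_left.2 ?_)
  · exact (lintegral_le_lintegral_add_of_le_add_indicator (hloss.comp measurable_fst) hcost
      fun w => ofReal_le_add_add_indicator (hpt w).1).trans
      (add_le_add_right (add_le_add_left hexcess _) _)
  · exact (lintegral_le_lintegral_add_of_le_add_indicator (hloss.comp measurable_snd) hcost
      fun w => ofReal_le_add_add_indicator (hpt w).2).trans
      (add_le_add_right (add_le_add_left hexcess _) _)

/-- The deviation between the errors of `f*` on `p_S^α` and on the
self-labelled target distribution `p_T^f` is controlled by `k·M·φ` plus the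
optimal transport cost for the ground cost
`D((x,y),(x',y')) = kλ d(x,x') + L(y,y')`. -/
theorem stmt7 {Z : Type*} [MeasurableSpace Z]
    (d : Z → Z → ℝ) (hdmeas : Measurable fun w : Z × Z => d w.1 w.2)
    (hdrefl : ∀ x, d x x = 0) (hdsymm : ∀ x x', d x x' = d x' x)
    (hdtri : ∀ x y z, d x z ≤ d x y + d y z)
    (k lam M φ : ℝ) (hk : 0 < k) (hlam : 0 < lam) (hM : 0 ≤ M)
    (hφ0 : 0 ≤ φ) (hφ1 : φ ≤ 1)
    (L : ℝ → ℝ → ℝ) (hLmeas : Measurable fun yy : ℝ × ℝ => L yy.1 yy.2)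
    (hL0 : ∀ a b, 0 ≤ L a b)
    (hLsymm : ∀ a b, L a b = L b a)
    (hLtri : ∀ a b c, L a c ≤ L a b + L b c)
    (hLlip : ∀ y a b, |L y a - L y b| ≤ k * |a - b|)
    (pSα pT : Measure (Z × ℝ)) [IsProbabilityMeasure pSα] [IsProbabilityMeasure pT]
    (f : Z → ℝ) (hf : Measurable f)
    (fstar : Z → ℝ) (hfstar : Measurable fstar)
    (hfstarM : ∀ x x', |fstar x - fstar x'| ≤ M)
    (πstar : Measure ((Z × ℝ) × (Z × ℝ)))
    (hπstar : IsCoupling πstar pSα (selfLabel pT f))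
    (hopt : ∫⁻ w, ENNReal.ofReal (k * lam * d w.1.1 w.2.1 + L w.1.2 w.2.2) ∂πstar
      = otCost (fun w w' : Z × ℝ => k * lam * d w.1 w'.1 + L w.2 w'.2) pSα (selfLabel pT f))
    (hptl : πstar {w : (Z × ℝ) × (Z × ℝ) |
        lam * d w.1.1 w.2.1 < |fstar w.1.1 - fstar w.2.1|} ≤ ENNReal.ofReal φ)
    (hfin1 : expLoss L (selfLabel pT f) fstar ≠ ⊤)
    (hfin2 : expLoss L pSα fstar ≠ ⊤) :
    max (expLoss L (selfLabel pT f) fstar - expLoss L pSα fstar)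
        (expLoss L pSα fstar - expLoss L (selfLabel pT f) fstar)
      ≤ ENNReal.ofReal (k * M * φ)
        + otCost (fun w w' : Z × ℝ => k * lam * d w.1 w'.1 + L w.2 w'.2)
            pSα (selfLabel pT f) :=
  stmt7_general d hdmeas hdrefl hdsymm hdtri k lam M φ hk hlam hφ0 L hLmeas hLsymm hLtri hLlip pSα
    pT f fstar hfstar hfstarM πstar hπstar hopt hptl
end
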